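/- arXiv:math/0410035 — 5 statements merged into one kernel-verified Lean document; each statement's English description precedes it below -/
import Mathlib

section
/- Let (X,d) be a geodesic metric space, D > 0, and suppose sup{ r : f_D(r) < 9D } is finite; set N = 1 + 3D + sup{ r : f_D(r) < 9D }. If γ and γ' are geodesics with γ(0) = γ'(0) and R > 0 satisfies d(γ(R),γ'(R)) ≥ D, then d(γ(R+N),γ'(R+N)) ≥ 3D. -/
open Metric Set

/-- `γ` is a unit-speed geodesic (an isometric embedding of a real interval)
on the set `s ⊆ ℝ`. -/
def IsGeodesicOn {X : Type*} [MetricSpace X] (γ : ℝ → X) (s : Set ℝ) : Prop :=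
  ∀ a ∈ s, ∀ b ∈ s, dist (γ a) (γ b) = |a - b|

/-- A geodesic metric space: any two points are joined by a geodesic. -/
def GeodesicSpace (X : Type*) [MetricSpace X] : Prop :=
  ∀ x y : X, ∃ γ : ℝ → X, γ 0 = x ∧ γ (dist x y) = y ∧
    IsGeodesicOn γ (Set.Icc 0 (dist x y))

/-- `S` is (the image of) a geodesic segment from `x` to `y`. -/
def IsGeodesicSegment {X : Type*} [MetricSpace X] (x y : X) (S : Set X) : Prop :=
  ∃ γ : ℝ → X, γ 0 = x ∧ γ (dist x y) = y ∧
    IsGeodesicOn γ (Set.Icc 0 (dist x y)) ∧ S = γ '' Set.Icc 0 (dist x y)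

/-- `X` is `δ`-hyperbolic: in any geodesic triangle each side lies in the
`δ`-neighbourhood of the union of the other two sides. -/
def DeltaHyperbolic (X : Type*) [MetricSpace X] (δ : ℝ) : Prop :=
  ∀ x y z : X, ∀ Sxy Syz Szx : Set X,
    IsGeodesicSegment x y Sxy → IsGeodesicSegment y z Syz → IsGeodesicSegment z x Szx →
    ∀ p ∈ Sxy, ∃ q ∈ Syz ∪ Szx, dist p q ≤ δ

/-- Papasoglu's candidate divergence function `f_D`:  `f_D 0 = D` and, for `r > 0`,
the infimum of `d(γ(R+r), γ'(R+r))` over all pairs of geodesics issuing from a common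
point with `d(γ(R), γ'(R)) ≥ D`.  (Valued in `ENNReal`, with `inf ∅ = ∞`.) -/
noncomputable def fD (X : Type*) [MetricSpace X] (D r : ℝ) : ENNReal :=
  if r ≤ 0 then ENNReal.ofReal D else
  sInf {A : ENNReal | ∃ (γ γ' : ℝ → X) (R : ℝ), 0 ≤ R ∧
    IsGeodesicOn γ (Set.Icc 0 (R + r)) ∧ IsGeodesicOn γ' (Set.Icc 0 (R + r)) ∧
    γ 0 = γ' 0 ∧ D ≤ dist (γ R) (γ' R) ∧ A = edist (γ (R + r)) (γ' (R + r))}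

/-- With `N = 1 + 3D + sup{r : f_D(r) < 9D}` (assumed finite): if two geodesics
issuing from a common point are at distance `≥ D` at time `R > 0`, then they are at
distance `≥ 3D` at time `R + N`. -/
theorem distance_triples_after_N
    {X : Type*} [MetricSpace X] (hX : GeodesicSpace X) (D : ℝ) (hD : 0 < D)
    (hfin : BddAbove {r : ℝ | fD X D r < ENNReal.ofReal (9 * D)})
    (N : ℝ) (hN : N = 1 + 3 * D + sSup {r : ℝ | fD X D r < ENNReal.ofReal (9 * D)})
    (γ γ' : ℝ → X) (R : ℝ) (hR : 0 < R)
    (hγ : IsGeodesicOn γ (Set.Icc 0 (R + N)))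
    (hγ' : IsGeodesicOn γ' (Set.Icc 0 (R + N)))
    (h0 : γ 0 = γ' 0) (hDd : D ≤ dist (γ R) (γ' R)) :
    3 * D ≤ dist (γ (R + N)) (γ' (R + N)) := by
  set s : Set ℝ := {r : ℝ | fD X D r < ENNReal.ofReal (9 * D)} with hs
  have h0mem : (0 : ℝ) ∈ s := by
    simp only [hs, Set.mem_setOf_eq, fD, if_pos le_rfl]
    exact (ENNReal.ofReal_lt_ofReal_iff (by linarith)).2 (by linarith)
  have hS0 : 0 ≤ sSup s := le_csSup hfin h0mem
  have hNS : sSup s < N := by rw [hN]; linarith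
  have hNpos : 0 < N := by rw [hN]; linarith
  have hNnot : N ∉ s := fun h => absurd (le_csSup hfin h) (not_le.2 hNS)
  have h9 : ENNReal.ofReal (9 * D) ≤ fD X D N := le_of_not_gt hNnot
  have hle : fD X D N ≤ edist (γ (R + N)) (γ' (R + N)) := by
    rw [fD, if_neg (not_le.2 hNpos)]
    exact sInf_le ⟨γ, γ', R, hR.le, hγ, hγ', h0, hDd, rfl⟩
  have : ENNReal.ofReal (9 * D) ≤ ENNReal.ofReal (dist (γ (R + N)) (γ' (R + N))) := by
    rw [← edist_dist]; exact h9.trans hle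
  have h9d : 9 * D ≤ dist (γ (R + N)) (γ' (R + N)) :=
    (ENNReal.ofReal_le_ofReal_iff dist_nonneg).1 this
  linarith
end

section
/- Let (X,d) be a geodesic metric space and D > 0. Set N = 1 + 3D + sup{ r : f_D(r) < 9D } and u = sup{ t : f_D(t) < 4N + 2 }, and assume these are finite. Then for every integer k > 1 and every r > u + kN one has e(r) > (3/2)^k (4N + 2). In particular the divergence function e has exponential growth. -/
open Metric Set

/-- The divergence function `e`: `e 0 = D` and, for `r > 0`, the infimum of the
lengths of paths joining `γ(R+r)` to `γ'(R+r)` inside the closure of the complement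
of the ball `B(x, R+r)`, over all `x`, all `R ≥ 0` and all geodesics `γ, γ'` with
`γ(0) = γ'(0) = x` and `d(γ(R), γ'(R)) ≥ D`.  (Valued in `ENNReal`.) -/
noncomputable def eDiv (X : Type*) [MetricSpace X] (D r : ℝ) : ENNReal :=
  if r ≤ 0 then ENNReal.ofReal D else
  sInf {L : ENNReal | ∃ (x : X) (γ γ' : ℝ → X) (R : ℝ) (α : ℝ → X), 0 ≤ R ∧
    IsGeodesicOn γ (Set.Icc 0 (R + r)) ∧ IsGeodesicOn γ' (Set.Icc 0 (R + r)) ∧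
    γ 0 = x ∧ γ' 0 = x ∧ D ≤ dist (γ R) (γ' R) ∧
    ContinuousOn α (Set.Icc 0 1) ∧ α 0 = γ (R + r) ∧ α 1 = γ' (R + r) ∧
    (∀ t ∈ Set.Icc (0:ℝ) 1, α t ∈ closure ((Metric.closedBall x (R + r))ᶜ)) ∧
    L = eVariationOn α (Set.Icc 0 1)}

section Aux
variable {X : Type*} [MetricSpace X]

lemma IsGeodesicOn.mono {γ : ℝ → X} {s t : Set ℝ} (h : IsGeodesicOn γ s) (hts : t ⊆ s) :
    IsGeodesicOn γ t := fun a ha b hb => h a (hts ha) b (hts hb)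

lemma mem_closure_compl_closedBall {x y : X} {ρ : ℝ}
    (h : y ∈ closure ((Metric.closedBall x ρ)ᶜ)) : ρ ≤ dist x y := by
  have hsub : (Metric.closedBall x ρ)ᶜ ⊆ {y : X | ρ ≤ dist x y} := by
    intro z hz
    simp only [Metric.mem_closedBall, not_le, mem_compl_iff] at hz
    exact le_of_lt (by simpa [dist_comm] using hz)
  have hcl : IsClosed {y : X | ρ ≤ dist x y} :=
    isClosed_le continuous_const (Continuous.dist continuous_const continuous_id)
  exact (closure_minimal hsub hcl) h

/-- Lower bound on the distance between two geodesic endpoints, from a lower bound on `fD`. -/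
lemma dist_sep (D : ℝ) {γ γ' : ℝ → X} {R w : ℝ} (hR : 0 ≤ R) (hw : R < w)
    (hg : IsGeodesicOn γ (Icc 0 w)) (hg' : IsGeodesicOn γ' (Icc 0 w))
    (h0 : γ 0 = γ' 0) (hsep : D ≤ dist (γ R) (γ' R))
    {C : ℝ} (hfd : ENNReal.ofReal C ≤ fD X D (w - R)) : C ≤ dist (γ w) (γ' w) := by
  have hRw : R + (w - R) = w := by ring
  have hmem : fD X D (w - R) ≤ edist (γ w) (γ' w) := by
    rw [fD, if_neg (by linarith : ¬ (w - R ≤ 0))]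
    apply sInf_le
    refine ⟨γ, γ', R, hR, by rw [hRw]; exact hg, by rw [hRw]; exact hg', h0, hsep, by rw [hRw]⟩
  have : ENNReal.ofReal C ≤ ENNReal.ofReal (dist (γ w) (γ' w)) := by
    calc ENNReal.ofReal C ≤ fD X D (w - R) := hfd
    _ ≤ edist (γ w) (γ' w) := hmem
    _ = ENNReal.ofReal (dist (γ w) (γ' w)) := edist_dist _ _
  exact (ENNReal.ofReal_le_ofReal_iff dist_nonneg).mp this

/-- Rigidity: geodesics from `x` to nearby faraway points have nearby initial segments. -/
lemma rigid {D N u : ℝ} (hD : 0 < D) (hN : 1 + 3*D ≤ N) (hu : 0 ≤ u)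
    (hA : ∀ t : ℝ, u < t → ENNReal.ofReal (4*N+2) ≤ fD X D t)
    {x : X} {κ κ' : ℝ → X} {T₁ T₂ sh ρ : ℝ}
    (hκ0 : κ 0 = x) (hκ'0 : κ' 0 = x)
    (hκg : IsGeodesicOn κ (Icc 0 T₁)) (hκ'g : IsGeodesicOn κ' (Icc 0 T₂))
    (hT₁ : ρ ≤ T₁) (hT₂ : ρ ≤ T₂) (hsh0 : 0 ≤ sh) (hshρ : sh + u < ρ)
    (hend : dist (κ T₁) (κ' T₂) < 2*N+1) : dist (κ sh) (κ' sh) < D := by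
  by_contra hcon
  have hcon : D ≤ dist (κ sh) (κ' sh) := not_lt.mp hcon
  set w := min T₁ T₂ with hwdef
  have hwT₁ : w ≤ T₁ := min_le_left _ _
  have hwT₂ : w ≤ T₂ := min_le_right _ _
  have hρw : ρ ≤ w := le_min hT₁ hT₂
  have hw : sh < w := by linarith
  have h0w : (0:ℝ) ≤ w := le_trans hsh0 hw.le
  have h42 : 4*N+2 ≤ dist (κ w) (κ' w) :=
    dist_sep D hsh0 hw (hκg.mono (Icc_subset_Icc le_rfl hwT₁))
      (hκ'g.mono (Icc_subset_Icc le_rfl hwT₂)) (hκ0.trans hκ'0.symm) hcon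
      (hA (w - sh) (by linarith))
  have hd1 : dist (κ w) (κ T₁) = T₁ - w := by
    rw [hκg w ⟨h0w, hwT₁⟩ T₁ ⟨le_trans h0w hwT₁, le_rfl⟩, abs_of_nonpos (by linarith)]
    ring
  have hd2 : dist (κ' T₂) (κ' w) = T₂ - w := by
    rw [hκ'g T₂ ⟨le_trans h0w hwT₂, le_rfl⟩ w ⟨h0w, hwT₂⟩, abs_of_nonneg (by linarith)]
  have hT1eq : dist x (κ T₁) = T₁ := by
    rw [← hκ0, hκg 0 ⟨le_rfl, le_trans h0w hwT₁⟩ T₁ ⟨le_trans h0w hwT₁, le_rfl⟩,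
      abs_of_nonpos (by linarith)]
    ring
  have hT2eq : dist x (κ' T₂) = T₂ := by
    rw [← hκ'0, hκ'g 0 ⟨le_rfl, le_trans h0w hwT₂⟩ T₂ ⟨le_trans h0w hwT₂, le_rfl⟩,
      abs_of_nonpos (by linarith)]
    ring
  have habs : |T₁ - T₂| ≤ dist (κ T₁) (κ' T₂) := by
    have h := abs_dist_sub_le (κ T₁) (κ' T₂) x
    rw [dist_comm (κ T₁) x, dist_comm (κ' T₂) x, hT1eq, hT2eq] at h
    exact h
  have hsum : (T₁ - w) + (T₂ - w) ≤ |T₁ - T₂| := by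
    rcases le_total T₁ T₂ with h | h
    · rw [hwdef, min_eq_left h, abs_of_nonpos (by linarith)]; linarith
    · rw [hwdef, min_eq_right h, abs_of_nonneg (by linarith)]; linarith
  have htri : dist (κ w) (κ' w) ≤
      dist (κ w) (κ T₁) + dist (κ T₁) (κ' T₂) + dist (κ' T₂) (κ' w) := dist_triangle4 _ _ _ _
  rw [hd1, hd2] at htri
  linarith

end Aux

section Key
variable {X : Type*} [MetricSpace X]

lemma evar_Icc_split (f : ℝ → X) {a b c : ℝ} (hab : a ≤ b) (hbc : b ≤ c) :
    eVariationOn f (Icc a b) + eVariationOn f (Icc b c) = eVariationOn f (Icc a c) := by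
  have h := eVariationOn.Icc_add_Icc f (s := univ) hab hbc (mem_univ b)
  simpa using h

lemma key (hX : GeodesicSpace X) {D N u : ℝ} (hD : 0 < D) (hN : 1 + 3*D ≤ N) (hu : 0 ≤ u)
    (hA : ∀ t : ℝ, u < t → ENNReal.ofReal (4*N+2) ≤ fD X D t)
    (hB : ENNReal.ofReal (9*D) ≤ fD X D (N - 3*D)) :
    ∀ (j : ℕ) (x : X) (σ σ' : ℝ → X) (T T' ρ sb : ℝ) (c d : ℝ) (β : ℝ → X),
      σ 0 = x → σ' 0 = x →
      IsGeodesicOn σ (Icc 0 T) → IsGeodesicOn σ' (Icc 0 T') →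
      ρ ≤ T → ρ ≤ T' → 0 ≤ sb → u + j * N < ρ - sb →
      D ≤ dist (σ sb) (σ' sb) →
      c ≤ d → ContinuousOn β (Icc c d) → β c = σ T → β d = σ' T' →
      (∀ s ∈ Icc c d, β s ∈ closure ((Metric.closedBall x ρ)ᶜ)) →
      ENNReal.ofReal (3 ^ j / 2 * (4 * N + 2)) ≤ eVariationOn β (Icc c d) := by
  classical
  intro j
  induction j with
  | zero =>
    intro x σ σ' T T' ρ sb c d β hσ0 hσ'0 hσg hσ'g hT hT' hsb hexc hsep hcd hcont hβc hβd him
    simp only [Nat.cast_zero, zero_mul, add_zero] at hexc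
    have hE : 2*N+1 ≤ dist (σ T) (σ' T') := by
      by_contra hE
      push_neg at hE
      have := rigid hD hN hu hA hσ0 hσ'0 hσg hσ'g hT hT' hsb (by linarith) hE
      linarith
    calc ENNReal.ofReal (3 ^ (0:ℕ) / 2 * (4 * N + 2))
        ≤ ENNReal.ofReal (dist (β c) (β d)) := by
          apply ENNReal.ofReal_le_ofReal
          rw [hβc, hβd, pow_zero]
          linarith
      _ = edist (β c) (β d) := (edist_dist _ _).symm
      _ ≤ eVariationOn β (Icc c d) := eVariationOn.edist_le β ⟨le_rfl, hcd⟩ ⟨hcd, le_rfl⟩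
  | succ m ih =>
    intro x σ σ' T T' ρ sb c d β hσ0 hσ'0 hσg hσ'g hT hT' hsb hexc hsep hcd hcont hβc hβd him
    have hNpos : (0:ℝ) < N := by linarith
    push_cast at hexc
    have hmN : (0:ℝ) ≤ (m:ℝ)*N := mul_nonneg (Nat.cast_nonneg m) hNpos.le
    set sh := sb + (N - 3*D) with hshdef
    have hsh0 : 0 ≤ sh := by simp only [hshdef]; linarith
    have hshu : sh + u < ρ := by simp only [hshdef]; linarith
    have hshρ : sh ≤ ρ := by linarith
    have hexc' : u + (m:ℝ) * N < ρ - sh := by simp only [hshdef]; linarith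
    -- separation 9D at radius sh
    have h9 : 9*D ≤ dist (σ sh) (σ' sh) := by
      refine dist_sep D hsb (by simp only [hshdef]; linarith)
        (hσg.mono (Icc_subset_Icc le_rfl (by linarith)))
        (hσ'g.mono (Icc_subset_Icc le_rfl (by linarith)))
        (hσ0.trans hσ'0.symm) hsep ?_
      rw [show sh - sb = N - 3*D by simp only [hshdef]; ring]
      exact hB
    -- uniform continuity and subdivision
    have hucont := isCompact_Icc.uniformContinuousOn_of_continuous hcont
    rw [Metric.uniformContinuousOn_iff] at hucont
    obtain ⟨δ, hδ, hδ'⟩ := hucont (2*N+1) (by linarith)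
    obtain ⟨n, hn⟩ := exists_nat_gt ((d - c)/δ)
    have hnR : (0:ℝ) < n := lt_of_le_of_lt (div_nonneg (by linarith) hδ.le) hn
    have hn0 : 0 < n := Nat.cast_pos.mp hnR
    set t : ℕ → ℝ := fun i => c + (d - c) * i / n with htdef
    have ht0 : t 0 = c := by simp [htdef]
    have htn : t n = d := by
      simp only [htdef]
      rw [mul_div_assoc, div_self (ne_of_gt hnR), mul_one]
      ring
    have htmono : ∀ {i j : ℕ}, i ≤ j → t i ≤ t j := by
      intro i j hij
      simp only [htdef]
      have hij' : (i:ℝ) ≤ j := by exact_mod_cast hij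
      have h1 : (d - c) * i ≤ (d - c) * j :=
        mul_le_mul_of_nonneg_left hij' (by linarith : (0:ℝ) ≤ d - c)
      have h2 : (d - c) * i / n ≤ (d - c) * j / n := by
        exact (div_le_div_iff_of_pos_right hnR).mpr h1
      linarith
    have htmem : ∀ i, i ≤ n → t i ∈ Icc c d := by
      intro i hi
      constructor
      · simp only [htdef]
        have : (0:ℝ) ≤ (d - c) * i / n :=
          div_nonneg (mul_nonneg (by linarith) (Nat.cast_nonneg i)) hnR.le
        linarith
      · rw [← htn]; exact htmono hi
    have hstep : ∀ i : ℕ, t (i+1) - t i = (d-c)/n := by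
      intro i
      simp only [htdef]
      push_cast
      field_simp
      ring
    have hstepδ : (d-c)/n < δ := by
      rw [div_lt_iff₀ hnR]
      have := (div_lt_iff₀ hδ).mp hn
      linarith
    have hclose : ∀ i : ℕ, i < n → dist (β (t i)) (β (t (i+1))) < 2*N+1 := by
      intro i hi
      refine hδ' _ (htmem i hi.le) _ (htmem (i+1) hi) ?_
      have hle : t i ≤ t (i+1) := htmono (Nat.le_succ i)
      rw [Real.dist_eq, abs_of_nonpos (by linarith), neg_sub, hstep i]
      exact hstepδ
    -- geodesics to points on the path
    choose κ hκ0 hκend hκgeo using fun i : ℕ => hX x (β (t i))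
    have hTi : ∀ i, i ≤ n → ρ ≤ dist x (β (t i)) := fun i hi =>
      mem_closure_compl_closedBall (him (t i) (htmem i hi))
    set g : ℕ → ℝ := fun i => dist (κ i sh) (σ sh) with hgdef
    have hjump : ∀ i, i < n → |g (i+1) - g i| < D := by
      intro i hi
      have hr := rigid hD hN hu hA (hκ0 (i+1)) (hκ0 i) (hκgeo (i+1)) (hκgeo i)
        (hTi (i+1) hi) (hTi i hi.le) hsh0 hshu
        (by rw [hκend, hκend, dist_comm]; exact hclose i hi)
      exact lt_of_le_of_lt (abs_dist_sub_le _ _ _) hr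
    have hg0 : g 0 < D := by
      refine rigid hD hN hu hA (hκ0 0) hσ0 (hκgeo 0) hσg (hTi 0 (Nat.zero_le n)) hT hsh0 hshu ?_
      rw [hκend 0, ht0, hβc, dist_self]
      linarith
    have hgn' : dist (κ n sh) (σ' sh) < D := by
      refine rigid hD hN hu hA (hκ0 n) hσ'0 (hκgeo n) hσ'g (hTi n le_rfl) hT' hsh0 hshu ?_
      rw [hκend n, htn, hβd, dist_self]
      linarith
    have hgn : 8*D < g n := by
      have htri := dist_triangle (σ sh) (κ n sh) (σ' sh)
      have : dist (σ sh) (κ n sh) = g n := dist_comm _ _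
      linarith
    -- first index where the shadow passes 4D
    have haex : ∃ i, 4*D < g i := ⟨n, by linarith⟩
    set a := Nat.find haex with hadef
    have ha : 4*D < g a := Nat.find_spec haex
    have hamin : ∀ i, i < a → g i ≤ 4*D := fun i hi => not_lt.mp (Nat.find_min haex hi)
    have han : a ≤ n := Nat.find_le (by linarith)
    have ha0 : a ≠ 0 := by intro h; rw [h] at ha; linarith
    obtain ⟨a', ha'⟩ := Nat.exists_eq_succ_of_ne_zero ha0
    have hga : g a < 5*D := by
      have h1 : g a' ≤ 4*D := hamin a' (by omega)
      have h2 := hjump a' (by omega)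
      rw [ha']
      rw [ha'] at ha
      have := (abs_lt.mp h2).2
      linarith
    -- first index where the shadow passes 6D
    have hbex : ∃ i, 6*D < g i := ⟨n, by linarith⟩
    set b := Nat.find hbex with hbdef
    have hb : 6*D < g b := Nat.find_spec hbex
    have hbmin : ∀ i, i < b → g i ≤ 6*D := fun i hi => not_lt.mp (Nat.find_min hbex hi)
    have hbn : b ≤ n := Nat.find_le (by linarith)
    have hab : a < b := by
      by_contra h
      push_neg at h
      rcases eq_or_lt_of_le h with h' | h'
      · rw [h'] at hb; linarith
      · have := hamin b h'; linarith
    have hb0 : b ≠ 0 := by omega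
    obtain ⟨b', hb'⟩ := Nat.exists_eq_succ_of_ne_zero hb0
    have hgb : g b < 7*D := by
      have h1 : g b' ≤ 6*D := hbmin b' (by omega)
      have h2 := hjump b' (by omega)
      rw [hb']
      rw [hb'] at hb
      have := (abs_lt.mp h2).2
      linarith
    -- the three separations
    have hs1 : D ≤ dist (σ sh) (κ a sh) := by
      rw [dist_comm]
      change 4*D < g a at ha
      linarith
    have hs2 : D ≤ dist (κ a sh) (κ b sh) := by
      have htri := dist_triangle (κ b sh) (κ a sh) (σ sh)
      rw [dist_comm (κ b sh) (κ a sh)] at htri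
      linarith
    have hs3 : D ≤ dist (κ b sh) (σ' sh) := by
      have htri := dist_triangle (σ sh) (κ b sh) (σ' sh)
      have hcm : dist (σ sh) (κ b sh) = g b := dist_comm _ _
      linarith
    -- the three pieces
    have hta : t a ∈ Icc c d := htmem a han
    have htb : t b ∈ Icc c d := htmem b hbn
    have htab : t a ≤ t b := htmono hab.le
    have p1 := ih x σ (κ a) T (dist x (β (t a))) ρ sh c (t a) β hσ0 (hκ0 a) hσg (hκgeo a)
      hT (hTi a han) hsh0 hexc' hs1 hta.1
      (hcont.mono (Icc_subset_Icc le_rfl hta.2)) hβc (hκend a).symm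
      (fun s hs => him s (Icc_subset_Icc le_rfl hta.2 hs))
    have p2 := ih x (κ a) (κ b) (dist x (β (t a))) (dist x (β (t b))) ρ sh (t a) (t b) β
      (hκ0 a) (hκ0 b) (hκgeo a) (hκgeo b) (hTi a han) (hTi b hbn) hsh0 hexc' hs2 htab
      (hcont.mono (Icc_subset_Icc hta.1 htb.2)) (hκend a).symm (hκend b).symm
      (fun s hs => him s (Icc_subset_Icc hta.1 htb.2 hs))
    have p3 := ih x (κ b) σ' (dist x (β (t b))) T' ρ sh (t b) d β
      (hκ0 b) hσ'0 (hκgeo b) hσ'g (hTi b hbn) hT' hsh0 hexc' hs3 htb.2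
      (hcont.mono (Icc_subset_Icc htb.1 le_rfl)) (hκend b).symm hβd
      (fun s hs => him s (Icc_subset_Icc htb.1 le_rfl hs))
    -- sum up
    have hZ : (0:ℝ) ≤ 3 ^ m / 2 * (4 * N + 2) :=
      mul_nonneg (by positivity) (by linarith)
    have hsplit1 : eVariationOn β (Icc c (t a)) + eVariationOn β (Icc (t a) (t b))
        = eVariationOn β (Icc c (t b)) := evar_Icc_split β hta.1 htab
    have hsplit2 : eVariationOn β (Icc c (t b)) + eVariationOn β (Icc (t b) d)
        = eVariationOn β (Icc c d) := evar_Icc_split β (le_trans hta.1 htab) htb.2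
    calc ENNReal.ofReal (3 ^ (m+1) / 2 * (4 * N + 2))
        = ENNReal.ofReal (3 ^ m / 2 * (4 * N + 2)) + ENNReal.ofReal (3 ^ m / 2 * (4 * N + 2))
          + ENNReal.ofReal (3 ^ m / 2 * (4 * N + 2)) := by
          rw [← ENNReal.ofReal_add hZ hZ, ← ENNReal.ofReal_add (by linarith) hZ]
          congr 1
          ring
      _ ≤ eVariationOn β (Icc c (t a)) + eVariationOn β (Icc (t a) (t b))
          + eVariationOn β (Icc (t b) d) := add_le_add (add_le_add p1 p2) p3
      _ = eVariationOn β (Icc c d) := by rw [hsplit1, hsplit2]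
end Key

/-- With `N = 1 + 3D + sup{r : f_D(r) < 9D}` and `u = sup{t : f_D(t) < 4N+2}`
(both assumed finite), for every integer `k > 1` and every `r > u + kN` one has
`e(r) > (3/2)^k (4N+2)`; in particular `e` has exponential growth. -/
theorem divergence_exponential_growth
    {X : Type*} [MetricSpace X] (hX : GeodesicSpace X) (D : ℝ) (hD : 0 < D)
    (hfin₁ : BddAbove {r : ℝ | fD X D r < ENNReal.ofReal (9 * D)})
    (N : ℝ) (hN : N = 1 + 3 * D + sSup {r : ℝ | fD X D r < ENNReal.ofReal (9 * D)})
    (hfin₂ : BddAbove {t : ℝ | fD X D t < ENNReal.ofReal (4 * N + 2)})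
    (u : ℝ) (hu : u = sSup {t : ℝ | fD X D t < ENNReal.ofReal (4 * N + 2)}) :
    ∀ k : ℕ, 1 < k → ∀ r : ℝ, u + k * N < r →
      ENNReal.ofReal ((3 / 2 : ℝ) ^ k * (4 * N + 2)) < eDiv X D r := by
  intro k hk r hr
  have h0mem₁ : (0:ℝ) ∈ {r : ℝ | fD X D r < ENNReal.ofReal (9 * D)} := by
    simp only [mem_setOf_eq, fD, if_pos le_rfl]
    exact (ENNReal.ofReal_lt_ofReal_iff (by linarith)).mpr (by linarith)
  have hs0 : 0 ≤ sSup {r : ℝ | fD X D r < ENNReal.ofReal (9 * D)} := le_csSup hfin₁ h0mem₁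
  have hN' : 1 + 3*D ≤ N := by rw [hN]; linarith
  have h0mem₂ : (0:ℝ) ∈ {t : ℝ | fD X D t < ENNReal.ofReal (4 * N + 2)} := by
    simp only [mem_setOf_eq, fD, if_pos le_rfl]
    exact (ENNReal.ofReal_lt_ofReal_iff (by linarith)).mpr (by linarith)
  have hu0 : 0 ≤ u := by rw [hu]; exact le_csSup hfin₂ h0mem₂
  have hA : ∀ t : ℝ, u < t → ENNReal.ofReal (4*N+2) ≤ fD X D t := by
    intro t ht
    by_contra hcon
    have hmem : t ∈ {t : ℝ | fD X D t < ENNReal.ofReal (4 * N + 2)} := not_le.mp hcon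
    have := le_csSup hfin₂ hmem
    rw [← hu] at this
    linarith
  have hB : ENNReal.ofReal (9*D) ≤ fD X D (N - 3*D) := by
    by_contra hcon
    have hmem : (N - 3*D) ∈ {r : ℝ | fD X D r < ENNReal.ofReal (9 * D)} := not_le.mp hcon
    have := le_csSup hfin₁ hmem
    rw [hN] at this
    linarith
  have hk2 : (2:ℝ) ≤ (k:ℝ) := by exact_mod_cast hk
  have hNpos : (0:ℝ) < N := by linarith
  have hkN : 2*N ≤ (k:ℝ)*N := mul_le_mul_of_nonneg_right hk2 hNpos.le
  have hr0 : 0 < r := by linarith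
  simp only [eDiv, if_neg (not_le.mpr hr0)]
  have hkey : ENNReal.ofReal (3 ^ k / 2 * (4 * N + 2)) ≤
      sInf {L : ENNReal | ∃ (x : X) (γ γ' : ℝ → X) (R : ℝ) (α : ℝ → X), 0 ≤ R ∧
        IsGeodesicOn γ (Set.Icc 0 (R + r)) ∧ IsGeodesicOn γ' (Set.Icc 0 (R + r)) ∧
        γ 0 = x ∧ γ' 0 = x ∧ D ≤ dist (γ R) (γ' R) ∧
        ContinuousOn α (Set.Icc 0 1) ∧ α 0 = γ (R + r) ∧ α 1 = γ' (R + r) ∧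
        (∀ t ∈ Set.Icc (0:ℝ) 1, α t ∈ closure ((Metric.closedBall x (R + r))ᶜ)) ∧
        L = eVariationOn α (Set.Icc 0 1)} := by
    apply le_sInf
    rintro L ⟨x, γ, γ', R, α, hR, hγ, hγ', hγ0, hγ'0, hsep, hcont, hα0, hα1, him, rfl⟩
    exact key hX hD hN' hu0 hA hB k x γ γ' (R+r) (R+r) (R+r) R 0 1 α hγ0 hγ'0 hγ hγ'
      le_rfl le_rfl hR (by linarith) hsep zero_le_one hcont hα0 hα1 him
  refine lt_of_lt_of_le ?_ hkey
  have hQ : (0:ℝ) < 3 ^ k / 2 * (4 * N + 2) := mul_pos (by positivity) (by linarith)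
  rw [ENNReal.ofReal_lt_ofReal_iff hQ]
  have h32 : ((3:ℝ)/2)^k = 3^k/2^k := div_pow 3 2 k
  have h2k : (4:ℝ) ≤ 2^k := by
    calc (4:ℝ) = 2^2 := by norm_num
    _ ≤ 2^k := pow_le_pow_right₀ (by norm_num) (by omega)
  have hlt : ((3:ℝ)/2)^k < 3^k/2 := by
    rw [h32]
    calc (3:ℝ)^k/2^k ≤ 3^k/4 := div_le_div_of_nonneg_left (by positivity) (by norm_num) h2k
    _ < 3^k/2 := div_lt_div_of_pos_left (by positivity) (by norm_num) (by norm_num)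
  exact mul_lt_mul_of_pos_right hlt (by linarith)
end

section
/- If a geodesic metric space (X,d) is δ-hyperbolic for some δ ≥ 0, then the intersection of any two closed metric balls has eccentricity at most 2δ and is at Hausdorff distance at most 2δ from some closed metric ball. More precisely, for any x,y ∈ X and s ≥ t ≥ 0 with B(x,s) and B(y,t) neither disjoint nor nested, one has B(c,r) ⊆ B(x,s) ∩ B(y,t) ⊆ B(c,r+2δ), where r = (s+t−d(x,y))/2 and c is a point on a geodesic from x to y at distance (s−t+d(x,y))/2 from x. -/
open Metric Set

/-- `A` and `B` are at Hausdorff distance at most `δ`: each is contained in the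
`δ`-neighbourhood of the other. -/
def HausdorffClose {X : Type*} [MetricSpace X] (A B : Set X) (δ : ℝ) : Prop :=
  (∀ a ∈ A, ∃ b ∈ B, dist a b ≤ δ) ∧ ∀ b ∈ B, ∃ a ∈ A, dist a b ≤ δ

/-- The set `S` has eccentricity at most `δ`: there are centres `c, c'` and a radius
`R ≥ 0` with `B(c,R) ⊆ S ⊆ B(c',R+δ)`; by convention the empty set has eccentricity `0`. -/
def EccentricityLE {X : Type*} [MetricSpace X] (S : Set X) (δ : ℝ) : Prop :=
  S = ∅ ∨ ∃ (c c' : X) (R : ℝ), 0 ≤ R ∧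
    Metric.closedBall c R ⊆ S ∧ S ⊆ Metric.closedBall c' (R + δ)

lemma key_lemma {X : Type*} [MetricSpace X] (hX : GeodesicSpace X)
    (δ : ℝ) (hδ : 0 ≤ δ) (hhyp : DeltaHyperbolic X δ)
    (x y : X) (s t : ℝ) (ht : 0 ≤ t) (hts : t ≤ s)
    (h1 : dist x y ≤ s + t) (h2 : s ≤ t + dist x y)
    (γ : ℝ → X) (hγ0 : γ 0 = x) (hγd : γ (dist x y) = y)
    (hgeo : IsGeodesicOn γ (Set.Icc 0 (dist x y))) :
    Metric.closedBall (γ ((s - t + dist x y) / 2)) ((s + t - dist x y) / 2) ⊆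
        Metric.closedBall x s ∩ Metric.closedBall y t ∧
    Metric.closedBall x s ∩ Metric.closedBall y t ⊆
        Metric.closedBall (γ ((s - t + dist x y) / 2))
          ((s + t - dist x y) / 2 + 2 * δ) := by
  set d := dist x y with hd_def
  have hd : 0 ≤ d := dist_nonneg
  set a := (s - t + d) / 2 with ha_def
  set r := (s + t - d) / 2 with hr_def
  have ha0 : 0 ≤ a := by simp only [ha_def]; linarith
  have had : a ≤ d := by simp only [ha_def]; linarith
  have hr0 : 0 ≤ r := by simp only [hr_def]; linarith
  have ha_mem : a ∈ Set.Icc (0:ℝ) d := ⟨ha0, had⟩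
  have hdcx : dist (γ a) x = a := by
    have := hgeo a ha_mem 0 ⟨le_refl 0, hd⟩
    rw [hγ0] at this
    rw [this, sub_zero, abs_of_nonneg ha0]
  have hdcy : dist (γ a) y = d - a := by
    have := hgeo a ha_mem d ⟨hd, le_refl d⟩
    rw [hγd] at this
    rw [this, abs_of_nonpos (by linarith), neg_sub]
  constructor
  · intro z hz
    rw [mem_closedBall] at hz
    constructor
    · rw [mem_closedBall]
      calc dist z x ≤ dist z (γ a) + dist (γ a) x := dist_triangle _ _ _
        _ ≤ r + a := by rw [hdcx]; linarith
        _ = s := by simp only [ha_def, hr_def]; ring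
    · rw [mem_closedBall]
      calc dist z y ≤ dist z (γ a) + dist (γ a) y := dist_triangle _ _ _
        _ ≤ r + (d - a) := by rw [hdcy]; linarith
        _ = t := by simp only [ha_def, hr_def]; ring
  · rintro z ⟨hzx, hzy⟩
    rw [mem_closedBall] at hzx hzy ⊢
    obtain ⟨σ, hσ0, hσL, hσgeo⟩ := hX y z
    obtain ⟨τ, hτ0, hτL, hτgeo⟩ := hX z x
    obtain ⟨q, hq, hdq⟩ := hhyp x y z (γ '' Set.Icc 0 d) (σ '' Set.Icc 0 (dist y z))
      (τ '' Set.Icc 0 (dist z x))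
      ⟨γ, hγ0, hγd, hgeo, rfl⟩ ⟨σ, hσ0, hσL, hσgeo, rfl⟩ ⟨τ, hτ0, hτL, hτgeo, rfl⟩
      (γ a) ⟨a, ha_mem, rfl⟩
    rcases hq with hq | hq
    · obtain ⟨u, hu, rfl⟩ := hq
      have hqy : dist (σ u) y = u := by
        have := hσgeo u hu 0 ⟨le_refl 0, dist_nonneg⟩
        rw [hσ0] at this
        rw [this, sub_zero, abs_of_nonneg hu.1]
      have hqz : dist (σ u) z = dist y z - u := by
        have := hσgeo u hu (dist y z) ⟨dist_nonneg, le_refl _⟩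
        rw [hσL] at this
        rw [this, abs_of_nonpos (by linarith [hu.2]), neg_sub]
      have h3 : d - a ≤ δ + u := by
        calc d - a = dist (γ a) y := hdcy.symm
          _ ≤ dist (γ a) (σ u) + dist (σ u) y := dist_triangle _ _ _
          _ ≤ δ + u := by rw [hqy]; linarith
      have h4 : dist y z ≤ t := by rw [dist_comm]; exact hzy
      calc dist z (γ a) ≤ dist z (σ u) + dist (σ u) (γ a) := dist_triangle _ _ _
        _ ≤ (dist y z - u) + δ := by
            rw [dist_comm z (σ u), hqz, dist_comm (σ u) (γ a)]; linarith
        _ ≤ r + 2 * δ := by simp only [ha_def, hr_def] at *; linarith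
    · obtain ⟨u, hu, rfl⟩ := hq
      have hqz : dist (τ u) z = u := by
        have := hτgeo u hu 0 ⟨le_refl 0, dist_nonneg⟩
        rw [hτ0] at this
        rw [this, sub_zero, abs_of_nonneg hu.1]
      have hqx : dist (τ u) x = dist z x - u := by
        have := hτgeo u hu (dist z x) ⟨dist_nonneg, le_refl _⟩
        rw [hτL] at this
        rw [this, abs_of_nonpos (by linarith [hu.2]), neg_sub]
      have h3 : a ≤ δ + (dist z x - u) := by
        calc a = dist (γ a) x := hdcx.symm
          _ ≤ dist (γ a) (τ u) + dist (τ u) x := dist_triangle _ _ _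
          _ ≤ δ + (dist z x - u) := by rw [hqx]; linarith
      have h4 : dist z x ≤ s := hzx
      calc dist z (γ a) ≤ dist z (τ u) + dist (τ u) (γ a) := dist_triangle _ _ _
        _ ≤ u + δ := by rw [dist_comm z (τ u), hqz, dist_comm (τ u) (γ a)]; linarith
        _ ≤ r + 2 * δ := by simp only [ha_def, hr_def] at *; linarith

lemma case_lemma {X : Type*} [MetricSpace X] (hX : GeodesicSpace X)
    (δ : ℝ) (hδ : 0 ≤ δ) (hhyp : DeltaHyperbolic X δ)
    (x y : X) (s t : ℝ) (ht : 0 ≤ t) (hts : t ≤ s) :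
    EccentricityLE (Metric.closedBall x s ∩ Metric.closedBall y t) (2 * δ) ∧
    ∃ (c : X) (R : ℝ), HausdorffClose (Metric.closedBall x s ∩ Metric.closedBall y t)
      (Metric.closedBall c R) (2 * δ) := by
  set d := dist x y with hd_def
  have hd : 0 ≤ d := dist_nonneg
  by_cases h1 : d ≤ s + t
  · by_cases h2 : s ≤ t + d
    · -- generic case
      obtain ⟨γ, hγ0, hγd, hgeo⟩ := hX x y
      obtain ⟨hsub1, hsub2⟩ := key_lemma hX δ hδ hhyp x y s t ht hts h1 h2 γ hγ0 hγd hgeo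
      set c := γ ((s - t + d) / 2)
      set r := (s + t - d) / 2 with hr_def
      have hr0 : 0 ≤ r := by simp only [hr_def]; linarith
      constructor
      · exact Or.inr ⟨c, c, r, hr0, hsub1, hsub2⟩
      · refine ⟨c, r, ?_, ?_⟩
        · intro z hz
          have hzc : dist z c ≤ r + 2 * δ := hsub2 hz
          by_cases hle : dist z c ≤ r
          · exact ⟨z, mem_closedBall.mpr hle, by simp [hδ]⟩
          · push_neg at hle
            obtain ⟨η, hη0, hηL, hηgeo⟩ := hX c z
            have hrmem : r ∈ Set.Icc (0:ℝ) (dist c z) := ⟨hr0, by rw [dist_comm]; linarith⟩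
            refine ⟨η r, ?_, ?_⟩
            · rw [mem_closedBall]
              have h5 := hηgeo r hrmem 0 ⟨le_refl 0, dist_nonneg⟩
              rw [hη0] at h5
              rw [h5, sub_zero, abs_of_nonneg hr0]
            · have h6 := hηgeo (dist c z) ⟨dist_nonneg, le_refl _⟩ r hrmem
              rw [hηL] at h6
              have hzc' : dist c z ≤ r + 2 * δ := by rw [dist_comm]; exact hzc
              rw [h6, abs_of_nonneg (by linarith [hrmem.2])]
              linarith
        · intro b hb
          exact ⟨b, hsub1 hb, by simp [hδ]⟩
    · -- nested: closedBall y t ⊆ closedBall x s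
      rw [not_le] at h2
      have hsub : Metric.closedBall y t ⊆ Metric.closedBall x s := by
        intro z hz
        rw [mem_closedBall] at hz ⊢
        calc dist z x ≤ dist z y + dist y x := dist_triangle _ _ _
          _ ≤ t + d := by rw [dist_comm y x]; linarith
          _ ≤ s := by linarith
      have heq : Metric.closedBall x s ∩ Metric.closedBall y t = Metric.closedBall y t :=
        Set.inter_eq_right.mpr hsub
      rw [heq]
      constructor
      · exact Or.inr ⟨y, y, t, ht, le_refl _,
          Metric.closedBall_subset_closedBall (by linarith)⟩
      · exact ⟨y, t, fun a ha => ⟨a, ha, by simp [hδ]⟩, fun b hb => ⟨b, hb, by simp [hδ]⟩⟩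
  · -- disjoint
    rw [not_le] at h1
    have heq : Metric.closedBall x s ∩ Metric.closedBall y t = ∅ := by
      ext z
      simp only [Set.mem_inter_iff, Metric.mem_closedBall, Set.mem_empty_iff_false,
        iff_false, not_and]
      intro hzx hzy
      have : d ≤ dist x z + dist z y := dist_triangle _ _ _
      rw [dist_comm x z] at this
      linarith
    rw [heq]
    refine ⟨Or.inl rfl, x, -1, ?_, ?_⟩
    · intro a ha; exact absurd ha (Set.notMem_empty a)
    · intro b hb
      rw [Metric.closedBall_eq_empty.mpr (by norm_num : (-1:ℝ) < 0)] at hb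
      exact absurd hb (Set.notMem_empty b)

/-- In a `δ`-hyperbolic geodesic space the intersection of any two closed balls has
eccentricity at most `2δ` and is at Hausdorff distance at most `2δ` from a closed
ball; more precisely `B(c,r) ⊆ B(x,s) ∩ B(y,t) ⊆ B(c, r+2δ)` for `r = (s+t-d)/2` and
`c` the point on a geodesic from `x` to `y` at distance `(s-t+d)/2` from `x`. -/
theorem hyperbolic_implies_bounded_eccentricity
    {X : Type*} [MetricSpace X] (hX : GeodesicSpace X)
    (δ : ℝ) (hδ : 0 ≤ δ) (hhyp : DeltaHyperbolic X δ) :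
    (∀ (x y : X) (s t : ℝ), 0 ≤ s → 0 ≤ t →
      EccentricityLE (Metric.closedBall x s ∩ Metric.closedBall y t) (2 * δ)) ∧
    (∀ (x y : X) (s t : ℝ), 0 ≤ s → 0 ≤ t → ∃ (c : X) (R : ℝ),
      HausdorffClose (Metric.closedBall x s ∩ Metric.closedBall y t)
        (Metric.closedBall c R) (2 * δ)) ∧
    (∀ (x y : X) (s t : ℝ), 0 ≤ t → t ≤ s →
      dist x y ≤ s + t → s ≤ t + dist x y → t ≤ s + dist x y →
      ∀ γ : ℝ → X, γ 0 = x → γ (dist x y) = y →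
        IsGeodesicOn γ (Set.Icc 0 (dist x y)) →
        Metric.closedBall (γ ((s - t + dist x y) / 2)) ((s + t - dist x y) / 2) ⊆
            Metric.closedBall x s ∩ Metric.closedBall y t ∧
        Metric.closedBall x s ∩ Metric.closedBall y t ⊆
            Metric.closedBall (γ ((s - t + dist x y) / 2))
              ((s + t - dist x y) / 2 + 2 * δ)) := by
  refine ⟨?_, ?_, ?_⟩
  · intro x y s t hs ht
    rcases le_total t s with h | h
    · exact (case_lemma hX δ hδ hhyp x y s t ht h).1
    · rw [Set.inter_comm]
      exact (case_lemma hX δ hδ hhyp y x t s hs h).1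
  · intro x y s t hs ht
    rcases le_total t s with h | h
    · exact (case_lemma hX δ hδ hhyp x y s t ht h).2
    · rw [Set.inter_comm]
      exact (case_lemma hX δ hδ hhyp y x t s hs h).2
  · intro x y s t ht hts h1 h2 _ γ hγ0 hγd hgeo
    exact key_lemma hX δ hδ hhyp x y s t ht hts h1 h2 γ hγ0 hγd hgeo
end

section
/- Suppose (X,d) is a geodesic metric space in which the intersection of any two closed metric balls has eccentricity at most ε, for a uniform constant ε ≥ 0. Then for any q ≥ 0 and any two points x,y ∈ X, every point on a q-path from x to y lies in the (2q+2ε)-neighborhood of any geodesic from x to y. -/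
open Metric Set

/-- A `K`-path from `x` to `y` (parametrised on `[0,1]`): a continuous path from `x`
to `y` every point `z` of which satisfies `d(x,z) + d(z,y) ≤ d(x,y) + K`. -/
def IsKPath {X : Type*} [MetricSpace X] (K : ℝ) (x y : X) (μ : ℝ → X) : Prop :=
  ContinuousOn μ (Set.Icc 0 1) ∧ μ 0 = x ∧ μ 1 = y ∧
  ∀ t ∈ Set.Icc (0:ℝ) 1, dist x (μ t) + dist (μ t) y ≤ dist x y + K

/-- If the intersection of any two closed balls has eccentricity at most `ε`, then any
point on a `q`-path from `x` to `y` lies in the `(2q+2ε)`-neighbourhood of any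
geodesic from `x` to `y`. -/
theorem kpath_close_to_geodesic_of_eccentricity
    {X : Type*} [MetricSpace X] (hX : GeodesicSpace X) (ε : ℝ) (hε : 0 ≤ ε)
    (hecc : ∀ (x y : X) (s t : ℝ), 0 ≤ s → 0 ≤ t →
      EccentricityLE (Metric.closedBall x s ∩ Metric.closedBall y t) ε)
    (q : ℝ) (hq : 0 ≤ q) (x y : X) (μ : ℝ → X) (hμ : IsKPath q x y μ)
    (γ : ℝ → X) (hγ0 : γ 0 = x) (hγ1 : γ (dist x y) = y)
    (hγ : IsGeodesicOn γ (Set.Icc 0 (dist x y))) :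
    ∀ tμ ∈ Set.Icc (0:ℝ) 1, ∃ tγ ∈ Set.Icc (0:ℝ) (dist x y),
      dist (μ tμ) (γ tγ) ≤ 2 * q + 2 * ε := by
  intro tμ htμ
  set p := μ tμ with hp
  set r1 := dist x p with hr1
  set r2 := dist p y with hr2
  set D := dist x y with hDdef
  have hsum : r1 + r2 ≤ D + q := hμ.2.2.2 tμ htμ
  have htri : D ≤ r1 + r2 := dist_triangle x p y
  have hD0 : 0 ≤ D := dist_nonneg
  have hr10 : 0 ≤ r1 := dist_nonneg
  have hr20 : 0 ≤ r2 := dist_nonneg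
  have hpS : p ∈ Metric.closedBall x r1 ∩ Metric.closedBall y r2 := by
    constructor
    · simp [Metric.mem_closedBall, dist_comm, hr1]
    · simp [Metric.mem_closedBall, hr2]
  rcases hecc x y r1 r2 hr10 hr20 with hemp | ⟨c, c', R, hR0, hBS, hSB⟩
  · exact absurd (hemp ▸ hpS) (Set.notMem_empty p)
  set t := max 0 (D - r2) with ht
  have ht0 : 0 ≤ t := le_max_left _ _
  have htD : t ≤ D := by
    apply max_le hD0; linarith
  have htlb : D - r2 ≤ t := le_max_right _ _
  have hgx : dist (γ t) x = t := by
    rw [← hγ0, hγ t ⟨ht0, htD⟩ 0 ⟨le_refl 0, hD0⟩]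
    simpa using abs_of_nonneg ht0
  have hgy : dist (γ t) y = D - t := by
    rw [← hγ1, hγ t ⟨ht0, htD⟩ D ⟨hD0, le_refl D⟩, abs_of_nonpos (by linarith)]
    ring
  have htr1 : t ≤ r1 := by
    apply max_le hr10; linarith
  have hgS : γ t ∈ Metric.closedBall x r1 ∩ Metric.closedBall y r2 := by
    constructor
    · rw [Metric.mem_closedBall, hgx]; exact htr1
    · rw [Metric.mem_closedBall, hgy]; linarith
  refine ⟨t, ⟨ht0, htD⟩, ?_⟩
  by_cases hRq : R ≤ q
  · have h1 : dist p c' ≤ R + ε := hSB hpS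
    have h2 : dist (γ t) c' ≤ R + ε := hSB hgS
    calc dist p (γ t) ≤ dist p c' + dist c' (γ t) := dist_triangle _ _ _
      _ ≤ (R + ε) + (R + ε) := by rw [dist_comm c']; linarith
      _ ≤ 2 * q + 2 * ε := by linarith
  · push_neg at hRq
    have hcS : c ∈ Metric.closedBall x r1 ∩ Metric.closedBall y r2 :=
      hBS (Metric.mem_closedBall_self hR0)
    have hcx : dist c x ≤ r1 := by
      have := hcS.1; rwa [Metric.mem_closedBall] at this
    have hcy : dist c y ≤ r2 := by
      have := hcS.2; rwa [Metric.mem_closedBall] at this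
    -- probe from c toward y to show dist c y ≤ q
    obtain ⟨γ', h0', h1', hgeo'⟩ := hX c y
    set m := min R (dist c y) with hm
    have hm0 : 0 ≤ m := le_min hR0 dist_nonneg
    have hmmem : m ∈ Set.Icc 0 (dist c y) := ⟨hm0, min_le_right _ _⟩
    have h0mem : (0:ℝ) ∈ Set.Icc 0 (dist c y) := ⟨le_refl 0, dist_nonneg⟩
    have hDmem : dist c y ∈ Set.Icc 0 (dist c y) := ⟨dist_nonneg, le_refl _⟩
    have hzc : dist (γ' m) c = m := by
      rw [← h0', hgeo' m hmmem 0 h0mem]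
      simpa using abs_of_nonneg hm0
    have hzy : dist (γ' m) y = dist c y - m := by
      have h4 := hgeo' m hmmem (dist c y) hDmem
      rw [h1'] at h4
      rw [h4, abs_of_nonpos (by linarith [min_le_right R (dist c y)])]
      ring
    have hzS : γ' m ∈ Metric.closedBall x r1 ∩ Metric.closedBall y r2 := by
      apply hBS
      rw [Metric.mem_closedBall, hzc]
      exact min_le_left _ _
    have hzx : dist (γ' m) x ≤ r1 := by
      have := hzS.1; rwa [Metric.mem_closedBall] at this
    have hmq : m ≤ q := by
      have h3 : D ≤ dist x (γ' m) + dist (γ' m) y := dist_triangle x (γ' m) y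
      rw [hzy, dist_comm x (γ' m)] at h3
      linarith
    have hcyq : dist c y ≤ q := by
      rcases le_total (dist c y) R with h | h
      · rwa [hm, min_eq_right h] at hmq
      · rw [hm, min_eq_left h] at hmq; linarith
    have hyS : y ∈ Metric.closedBall x r1 ∩ Metric.closedBall y r2 := by
      apply hBS
      rw [Metric.mem_closedBall, dist_comm]
      linarith
    have hDr1 : D ≤ r1 := by
      have := hyS.1; rwa [Metric.mem_closedBall, dist_comm, ← hDdef] at this
    have hr2q : r2 ≤ q := by linarith
    calc dist p (γ t) ≤ dist p y + dist y (γ t) := dist_triangle _ _ _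
      _ = r2 + (D - t) := by rw [dist_comm y]; rw [hgy]
      _ ≤ 2 * q + 2 * ε := by linarith
end

section
/- Suppose (X,d) is a geodesic metric space in which the intersection of any two closed metric balls is at Hausdorff distance at most ε from some closed metric ball, for a uniform constant ε ≥ 0. Then for any q ≥ 0 and any two points x,y ∈ X, every point on a q-path from x to y lies in the (2q+6ε)-neighborhood of any geodesic from x to y. -/
open Metric Set

/-!
Let `z` be a point of the `q`-path, `s = d(x,z)`, `t = d(z,y)`, so `s + t ≤ d(x,y) + q`. Both `z`
and the point `m` of the geodesic at distance `min s d(x,y)` from `x` lie in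
`I = B(x,s) ∩ B(y,t)`, which is `ε`-close to a ball `B(c,R)`; hence `d(z,m) ≤ 2(R + ε)`.
If `R ≤ d(x,c)`, the point of a geodesic from `x` to `c` at distance `R` from `c` is
`ε`-close to `I`, which forces `R ≤ q + 2ε`. Otherwise `x ∈ B(c,R)` is `ε`-close to `I`, so
`d(x,y) ≤ t + ε`, hence `s ≤ q + ε` and `d(z,m) ≤ d(z,x) + d(x,m) ≤ 2s`.
-/

section

variable {X : Type*} [MetricSpace X]

theorem IsGeodesicOn.dist_eq_sub {γ : ℝ → X} {s : Set ℝ} (hγ : IsGeodesicOn γ s) {a b : ℝ}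
    (ha : a ∈ s) (hb : b ∈ s) (hab : a ≤ b) : dist (γ a) (γ b) = b - a := by
  rw [hγ a ha b hb, abs_of_nonpos (sub_nonpos.2 hab), neg_sub]

theorem IsGeodesicOn.exists_mem_closedBall_inter_closedBall {γ : ℝ → X} {x y : X}
    (hγ : IsGeodesicOn γ (Icc 0 (dist x y))) (hγ0 : γ 0 = x) (hγ1 : γ (dist x y) = y)
    {s t : ℝ} (hs : 0 ≤ s) (ht : 0 ≤ t) (hxy : dist x y ≤ s + t) :
    ∃ u ∈ Icc 0 (dist x y), γ u ∈ closedBall x s ∩ closedBall y t := by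
  have hu : min s (dist x y) ∈ Icc 0 (dist x y) := ⟨le_min hs dist_nonneg, min_le_right _ _⟩
  have hx := hγ.dist_eq_sub ⟨le_rfl, dist_nonneg⟩ hu hu.1
  have hy := hγ.dist_eq_sub hu ⟨dist_nonneg, le_rfl⟩ hu.2
  rw [hγ0, sub_zero] at hx
  rw [hγ1] at hy
  refine ⟨_, hu, ?_, ?_⟩
  · rw [mem_closedBall, dist_comm, hx]
    exact min_le_left _ _
  · rw [mem_closedBall, hy]
    rcases min_cases s (dist x y) with ⟨h, -⟩ | ⟨h, -⟩ <;> rw [h] <;> linarith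

theorem GeodesicSpace.exists_mem_closedBall_dist_eq_sub (hX : GeodesicSpace X) (x c : X)
    {R : ℝ} (hR : 0 ≤ R) (hRc : R ≤ dist x c) :
    ∃ w ∈ closedBall c R, dist x w = dist x c - R := by
  obtain ⟨σ, hσ0, hσc, hσ⟩ := hX x c
  have hw : dist x c - R ∈ Icc 0 (dist x c) := ⟨sub_nonneg.2 hRc, sub_le_self _ hR⟩
  have hwx := hσ.dist_eq_sub ⟨le_rfl, dist_nonneg⟩ hw hw.1
  have hwc := hσ.dist_eq_sub hw ⟨dist_nonneg, le_rfl⟩ hw.2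
  rw [hσ0, sub_zero] at hwx
  rw [hσc, sub_sub_cancel] at hwc
  exact ⟨_, mem_closedBall.2 hwc.le, hwx⟩

namespace HausdorffClose

variable {A B : Set X} {ε : ℝ}

theorem symm (h : HausdorffClose A B ε) : HausdorffClose B A ε :=
  ⟨fun b hb ↦ (h.2 b hb).imp fun _ ⟨ha, hab⟩ ↦ ⟨ha, by rwa [dist_comm]⟩,
    fun a ha ↦ (h.1 a ha).imp fun _ ⟨hb, hab⟩ ↦ ⟨hb, by rwa [dist_comm]⟩⟩

theorem dist_le_of_subset_closedBall (h : HausdorffClose A B ε) {y : X} {t : ℝ}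
    (hA : A ⊆ closedBall y t) {b : X} (hb : b ∈ B) : dist b y ≤ t + ε := by
  obtain ⟨a, ha, hab⟩ := h.2 b hb
  linarith [dist_triangle b a y, dist_comm a b, mem_closedBall.1 (hA ha)]

theorem radius_le_of_inter_closedBall (hX : GeodesicSpace X) {x y c : X} {s t R : ℝ}
    (h : HausdorffClose (closedBall x s ∩ closedBall y t) (closedBall c R) ε)
    (hR : 0 ≤ R) (hRc : R ≤ dist x c) : R ≤ s + t - dist x y + 2 * ε := by
  obtain ⟨w, hw, hxw⟩ := hX.exists_mem_closedBall_dist_eq_sub x c hR hRc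
  have hwy := h.dist_le_of_subset_closedBall inter_subset_right hw
  have hcx := h.dist_le_of_subset_closedBall inter_subset_left (mem_closedBall_self hR)
  linarith [dist_triangle x w y, dist_comm c x]

end HausdorffClose

end

theorem kpath_close_to_geodesic_of_hausdorff_general
    {X : Type*} [MetricSpace X] (hX : GeodesicSpace X) (ε : ℝ) (hε : 0 ≤ ε)
    (hhaus : ∀ (x y : X) (s t : ℝ), 0 ≤ s → 0 ≤ t → ∃ (c : X) (R : ℝ),
      HausdorffClose (Metric.closedBall x s ∩ Metric.closedBall y t)
        (Metric.closedBall c R) ε)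
    (q : ℝ) (x y : X) (μ : ℝ → X) (hμ : IsKPath q x y μ)
    (γ : ℝ → X) (hγ0 : γ 0 = x) (hγ1 : γ (dist x y) = y)
    (hγ : IsGeodesicOn γ (Set.Icc 0 (dist x y))) :
    ∀ tμ ∈ Set.Icc (0:ℝ) 1, ∃ tγ ∈ Set.Icc (0:ℝ) (dist x y),
      dist (μ tμ) (γ tγ) ≤ 2 * q + 6 * ε := by
  intro τ hτ
  set z := μ τ
  have hK : dist x z + dist z y ≤ dist x y + q := hμ.2.2.2 τ hτ
  have hz : z ∈ closedBall x (dist x z) ∩ closedBall y (dist z y) :=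
    ⟨by rw [mem_closedBall, dist_comm], mem_closedBall.2 le_rfl⟩
  obtain ⟨u, hu, hm⟩ := hγ.exists_mem_closedBall_inter_closedBall hγ0 hγ1 dist_nonneg
    dist_nonneg (dist_triangle x z y)
  obtain ⟨c, R, hH⟩ := hhaus x y (dist x z) (dist z y) dist_nonneg dist_nonneg
  refine ⟨u, hu, ?_⟩
  rcases lt_or_ge (dist x c) R with hxc | hRc
  · have hxy := hH.dist_le_of_subset_closedBall inter_subset_right
      (mem_closedBall.2 hxc.le)
    calc dist z (γ u) ≤ dist x z + dist x (γ u) := dist_triangle_left _ _ _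
      _ ≤ dist x z + dist x z := by
        gcongr
        simpa only [mem_closedBall, dist_comm] using hm.1
      _ ≤ 2 * q + 6 * ε := by linarith
  · have hR : 0 ≤ R := by
      obtain ⟨b, hb, -⟩ := hH.1 z hz
      exact dist_nonneg.trans hb
    have hzc := hH.symm.dist_le_of_subset_closedBall subset_rfl hz
    have hmc := hH.symm.dist_le_of_subset_closedBall subset_rfl hm
    have hRq := hH.radius_le_of_inter_closedBall hX hR hRc
    calc dist z (γ u) ≤ dist z c + dist (γ u) c := dist_triangle_right _ _ _
      _ ≤ 2 * q + 6 * ε := by linarith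

/-- If the intersection of any two closed balls is at Hausdorff distance at most `ε`
from some closed ball, then any point on a `q`-path from `x` to `y` lies in the
`(2q+6ε)`-neighbourhood of any geodesic from `x` to `y`. -/
theorem kpath_close_to_geodesic_of_hausdorff
    {X : Type*} [MetricSpace X] (hX : GeodesicSpace X) (ε : ℝ) (hε : 0 ≤ ε)
    (hhaus : ∀ (x y : X) (s t : ℝ), 0 ≤ s → 0 ≤ t → ∃ (c : X) (R : ℝ),
      HausdorffClose (Metric.closedBall x s ∩ Metric.closedBall y t)
        (Metric.closedBall c R) ε)
    (q : ℝ) (hq : 0 ≤ q) (x y : X) (μ : ℝ → X) (hμ : IsKPath q x y μ)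
    (γ : ℝ → X) (hγ0 : γ 0 = x) (hγ1 : γ (dist x y) = y)
    (hγ : IsGeodesicOn γ (Set.Icc 0 (dist x y))) :
    ∀ tμ ∈ Set.Icc (0:ℝ) 1, ∃ tγ ∈ Set.Icc (0:ℝ) (dist x y),
      dist (μ tμ) (γ tγ) ≤ 2 * q + 6 * ε :=
  kpath_close_to_geodesic_of_hausdorff_general hX ε hε hhaus q x y μ hμ γ hγ0 hγ1 hγ
end
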